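/- arXiv:2511.11988 — 3 statements merged into one kernel-verified Lean document; each statement's English description precedes it below -/
import Mathlib

section
/- Let z ∈ ℝ have a decomposition z = Uβ + M + L/β where U, M ∈ ℤ, L ∈ ℝ, and β ≥ 2 is an integer. If |L/β| < 1/2 and |M/β + L/β²| < 1/2, then round(z) − β·round(z/β) = M, where round denotes rounding to the nearest integer. -/
/-! Both roundings only remove a perturbation of size less than `1/2` from an integer:
`z = (Uβ + M) + L/β` and `z/β = U + (M/β + L/β²)`. -/

theorem round_intCast_add_of_abs_lt {α : Type*} [Field α] [LinearOrder α] [IsStrictOrderedRing α]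
    [FloorRing α] (n : ℤ) {x : α} (hx : |x| < 1 / 2) : round ((n : α) + x) = n := by
  obtain ⟨hlo, hhi⟩ := abs_lt.1 hx
  rw [round_intCast_add, round_eq_zero_iff.2 ⟨hlo.le, hhi⟩, add_zero]

theorem extractor_sufficiency_general (β U M : ℤ) (L : ℝ)
    (z : ℝ) (hz : z = (U : ℝ) * β + M + L / β)
    (h1 : |L / (β : ℝ)| < 1 / 2)
    (h2 : |(M : ℝ) / β + L / (β : ℝ) ^ 2| < 1 / 2) :
    round z - β * round (z / β) = M := by
  have hround : round z = U * β + M := by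
    have hsplit : z = ((U * β + M : ℤ) : ℝ) + L / β := by push_cast; exact hz
    rw [hsplit, round_intCast_add_of_abs_lt _ h1]
  have hupper : β * round (z / β) = β * U := by
    rcases eq_or_ne β 0 with rfl | hβ
    · simp
    · have hsplit : z / β = U + ((M : ℝ) / β + L / (β : ℝ) ^ 2) := by
        rw [hz]; field_simp; ring
      rw [hsplit, round_intCast_add_of_abs_lt _ h2]
  rw [hround, hupper]; ring

/-- Extractor Sufficiency: if `z = Uβ + M + L/β` with integer `U, M`, real `L`,
integer base `β ≥ 2`, and the two gap conditions hold, then the two-round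
extractor `round z − β · round (z/β)` returns `M` exactly. -/
theorem extractor_sufficiency (β U M : ℤ) (L : ℝ) (hβ : 2 ≤ β)
    (z : ℝ) (hz : z = (U : ℝ) * β + M + L / β)
    (h1 : |L / (β : ℝ)| < 1 / 2)
    (h2 : |(M : ℝ) / β + L / (β : ℝ) ^ 2| < 1 / 2) :
    round z - β * round (z / β) = M :=
  extractor_sufficiency_general β U M L z hz h1 h2
end

section
/- Let β ≥ 2 be an integer and suppose for each depth ℓ the values M_ℓ, L_ℓ ∈ ℤ and U_ℓ ∈ ℤ satisfy |M_ℓ| ≤ 2S_ℓ and |L_ℓ| ≤ S_ℓ with S_ℓ = (n/2^{ℓ+1})·B² and β ≥ 4·(n/2)·B² + 1. Then for every ℓ, mid_β(U_ℓ β + M_ℓ + L_ℓ/β) = M_ℓ. -/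
/-!
Every level has the same global base `β > 4 S₀` with `S₀ = (n/2)B²`, and the depth-`ℓ`
bound `S_ℓ` only shrinks with `ℓ`. So `L_ℓ/β` is a perturbation of size `< 1/2` that rounding
removes, while `M_ℓ + L_ℓ/β` stays inside the balanced window `(-β/2, β/2)`, so that rounding
`z/β` recovers exactly `U_ℓ`.
-/

variable {α : Type*} [Field α] [LinearOrder α] [IsStrictOrderedRing α] [FloorRing α]

def midDigit (β : ℤ) (z : α) : ℤ := round z - β * round (z / β)

lemma round_eq_zero_of_abs_lt_half {x : α} (h : |x| < 1 / 2) : round x = 0 := by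
  rw [round_eq_zero_iff]
  obtain ⟨hlo, hhi⟩ := abs_lt.mp h
  exact ⟨by linarith, hhi⟩

lemma midDigit_mul_add_add {β U M : ℤ} {ε : α} (hβ : (0 : α) < β) (hε : |ε| < 1 / 2)
    (hMε : |(M : α) + ε| < β / 2) :
    midDigit β ((U : α) * β + M + ε) = M := by
  have hlow : round ((U : α) * β + M + ε) = U * β + M := by
    rw [show (U : α) * β + M + ε = ε + ((U * β + M : ℤ) : α) by push_cast; ring,
      round_add_intCast, round_eq_zero_of_abs_lt_half hε, zero_add]
  have hwindow : |((M : α) + ε) / β| < 1 / 2 := by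
    rw [abs_div, abs_of_pos hβ, div_lt_iff₀ hβ]
    linarith
  have hhigh : round (((U : α) * β + M + ε) / β) = U := by
    rw [show ((U : α) * β + M + ε) / β = ((M : α) + ε) / β + (U : α) by field_simp; ring,
      round_add_intCast, round_eq_zero_of_abs_lt_half hwindow, zero_add]
  rw [midDigit, hlow, hhigh]
  ring

lemma midDigit_eq_of_gap {β U M L : ℤ} {S : α} (hM : |(M : α)| ≤ 2 * S)
    (hL : |(L : α)| ≤ S) (hβ : 4 * S + 1 ≤ β) :
    midDigit β ((U : α) * β + M + L / β) = M := by
  have hS : 0 ≤ S := (abs_nonneg _).trans hL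
  have hβpos : (0 : α) < β := by linarith
  have hLβ : |(L : α) / β| < 1 / 2 := by
    rw [abs_div, abs_of_pos hβpos, div_lt_iff₀ hβpos]
    linarith
  refine midDigit_mul_add_add hβpos hLβ ?_
  calc |(M : α) + L / β| ≤ |(M : α)| + |(L : α) / β| := abs_add_le _ _
    _ < β / 2 := by linarith

theorem global_gap_extractor_general (n B : ℕ)
    (β : ℤ)
    (hβ : 4 * ((n : ℝ) / 2 * (B : ℝ) ^ 2) + 1 ≤ (β : ℝ))
    (U M L : ℕ → ℤ)
    (hM : ∀ ℓ, |(M ℓ : ℝ)| ≤ 2 * ((n : ℝ) / 2 ^ (ℓ + 1) * (B : ℝ) ^ 2))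
    (hL : ∀ ℓ, |(L ℓ : ℝ)| ≤ (n : ℝ) / 2 ^ (ℓ + 1) * (B : ℝ) ^ 2) :
    ∀ ℓ,
      round ((U ℓ : ℝ) * β + (M ℓ : ℝ) + (L ℓ : ℝ) / β) -
        β * round (((U ℓ : ℝ) * β + (M ℓ : ℝ) + (L ℓ : ℝ) / β) / β) = M ℓ := by
  intro ℓ
  have hdepth : (n : ℝ) / 2 ^ (ℓ + 1) * (B : ℝ) ^ 2 ≤ (n : ℝ) / 2 * (B : ℝ) ^ 2 := by
    gcongr
    exact le_self_pow₀ one_le_two (Nat.succ_ne_zero ℓ)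
  exact midDigit_eq_of_gap ((hM ℓ).trans (by linarith)) ((hL ℓ).trans hdepth) hβ

/-- Global gap sufficiency for the extractor: with `S_ℓ = (n/2^{ℓ+1})B²` and a
single global base `β ≥ 4·(n/2)·B² + 1`, depth-ℓ values `z = U_ℓ β + M_ℓ + L_ℓ/β`
with `|M_ℓ| ≤ 2S_ℓ` and `|L_ℓ| ≤ S_ℓ` are extracted exactly at every depth. -/
theorem global_gap_extractor (n B : ℕ) (hn : ∃ k, n = 2 ^ k) (hB : 1 ≤ B)
    (β : ℤ) (hβ2 : 2 ≤ β)
    (hβ : 4 * ((n : ℝ) / 2 * (B : ℝ) ^ 2) + 1 ≤ (β : ℝ))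
    (U M L : ℕ → ℤ)
    (hM : ∀ ℓ, |(M ℓ : ℝ)| ≤ 2 * ((n : ℝ) / 2 ^ (ℓ + 1) * (B : ℝ) ^ 2))
    (hL : ∀ ℓ, |(L ℓ : ℝ)| ≤ (n : ℝ) / 2 ^ (ℓ + 1) * (B : ℝ) ^ 2) :
    ∀ ℓ,
      round ((U ℓ : ℝ) * β + (M ℓ : ℝ) + (L ℓ : ℝ) / β) -
        β * round (((U ℓ : ℝ) * β + (M ℓ : ℝ) + (L ℓ : ℝ) / β) / β) = M ℓ :=
  global_gap_extractor_general n B β hβ U M L hM hL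
end

section
/- Let β ≥ 2 be an integer and let M, L ∈ ℤ with |M| ≤ 2S and |L| ≤ S for some real S ≥ 0. Let M̂, L̂ ∈ ℝ satisfy |M̂ − M| ≤ δ and |L̂ − L| ≤ η. If β ≥ 4(S + η) + 1 and δ + (S + η)/β < 1/2 and δ ≤ 1/4, then round(M̂ + L̂/β) = M and round(M̂/β + L̂/β²) = 0; consequently round(M̂ + L̂/β) − β·round(M̂/β + L̂/β²) = M. -/
/-!
Both roundings are controlled by the triangle inequality. In `M̂ + L̂/β` the error beyond `δ` is
at most `|L̂|/β ≤ (S + η)/β`. For the second rounding, the guard `β ≥ 4(S + η) + 1` gives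
`2S + δ ≤ 2(S + η) + 1/4 ≤ β/2 - 1/4` and `S + η < β/4`, so
`(2S + δ)/β + (S + η)/β² < (β/2 - 1/4)/β + 1/(4β) = 1/2`.
-/

theorem abs_le_add_of_abs_sub_le {G : Type*} [AddCommGroup G] [LinearOrder G]
    [IsOrderedAddMonoid G] {x y B e : G} (hy : |y| ≤ B) (hxy : |x - y| ≤ e) :
    |x| ≤ B + e :=
  calc |x| = |y| + (|x| - |y|) := by abel
    _ ≤ B + e := add_le_add hy ((abs_sub_abs_le_abs_sub x y).trans hxy)

section Round

variable {α : Type*} [Field α] [LinearOrder α] [IsStrictOrderedRing α] [FloorRing α]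

theorem round_eq_of_abs_sub_lt {x : α} {n : ℤ} (h : |x - n| < 1 / 2) : round x = n := by
  obtain ⟨hlo, hhi⟩ := abs_sub_lt_iff.1 h
  exact round_eq_iff.2 ⟨by linarith, by linarith⟩

theorem round_add_div_eq {a b β ε B : α} {m : ℤ} (hβ : 0 < β) (ha : |a - m| ≤ ε)
    (hb : |b| ≤ B) (h : ε + B / β < 1 / 2) : round (a + b / β) = m := by
  refine round_eq_of_abs_sub_lt ?_
  calc |a + b / β - m| = |(a - m) + b / β| := by ring_nf
    _ ≤ |a - m| + |b / β| := abs_add_le _ _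
    _ = |a - m| + |b| / β := by rw [abs_div, abs_of_pos hβ]
    _ ≤ ε + B / β := by gcongr
    _ < 1 / 2 := h

theorem round_div_add_div_sq_eq_zero {a b β A B : α} (hβ : 0 < β) (ha : |a| ≤ A)
    (hb : |b| ≤ B) (h : A / β + B / β ^ 2 < 1 / 2) : round (a / β + b / β ^ 2) = 0 := by
  refine round_eq_of_abs_sub_lt ?_
  calc |a / β + b / β ^ 2 - (0 : ℤ)| = |a / β + b / β ^ 2| := by rw [Int.cast_zero, sub_zero]
    _ ≤ |a / β| + |b / β ^ 2| := abs_add_le _ _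
    _ = |a| / β + |b| / β ^ 2 := by rw [abs_div, abs_div, abs_pow, abs_of_pos hβ]
    _ ≤ A / β + B / β ^ 2 := by gcongr
    _ < 1 / 2 := h

theorem div_add_div_sq_lt_half {a t β : α} (ht : 0 ≤ t) (hβ : 4 * t + 1 ≤ β)
    (ha : a ≤ 2 * t + 1 / 4) : a / β + t / β ^ 2 < 1 / 2 := by
  have hβ0 : 0 < β := by linarith
  rw [div_add_div _ _ hβ0.ne' (pow_pos hβ0 2).ne', div_lt_iff₀ (by positivity)]
  nlinarith

end Round

theorem fp_guard_general (β M L : ℤ) (S : ℝ)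
    (hM : |(M : ℝ)| ≤ 2 * S) (hL : |(L : ℝ)| ≤ S)
    (Mhat Lhat : ℝ) (δ η : ℝ)
    (hMhat : |Mhat - (M : ℝ)| ≤ δ) (hLhat : |Lhat - (L : ℝ)| ≤ η)
    (hguard1 : 4 * (S + η) + 1 ≤ (β : ℝ))
    (hguard2 : δ + (S + η) / (β : ℝ) < 1 / 2)
    (hδ : δ ≤ 1 / 4) :
    round (Mhat + Lhat / β) = M ∧
    round (Mhat / β + Lhat / (β : ℝ) ^ 2) = 0 ∧
    round (Mhat + Lhat / β) - β * round (Mhat / β + Lhat / (β : ℝ) ^ 2) = M := by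
  have hη : 0 ≤ η := (abs_nonneg _).trans hLhat
  have hSη : 0 ≤ S + η := add_nonneg ((abs_nonneg _).trans hL) hη
  have hβ : (0 : ℝ) < β := by linarith
  have hLhat' : |Lhat| ≤ S + η := abs_le_add_of_abs_sub_le hL hLhat
  have hMhat' : |Mhat| ≤ 2 * S + δ := abs_le_add_of_abs_sub_le hM hMhat
  have hfirst : round (Mhat + Lhat / β) = M := round_add_div_eq hβ hMhat hLhat' hguard2
  have hsecond : round (Mhat / β + Lhat / (β : ℝ) ^ 2) = 0 :=
    round_div_add_div_sq_eq_zero hβ hMhat' hLhat'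
      (div_add_div_sq_lt_half hSη hguard1 (by linarith))
  refine ⟨hfirst, hsecond, ?_⟩
  rw [hfirst, hsecond, mul_zero, sub_zero]

/-- Floating-point guard for the U-free two-round extractor: with band bounds
`|M| ≤ 2S`, `|L| ≤ S`, approximation errors `δ` and `η`, base guard
`β ≥ 4(S+η)+1` and `δ + (S+η)/β < 1/2` with `δ ≤ 1/4`, the two roundings return
`M` and `0`, hence the extractor recovers `M` exactly. -/
theorem fp_guard (β M L : ℤ) (hβ : 2 ≤ β) (S : ℝ) (hS : 0 ≤ S)
    (hM : |(M : ℝ)| ≤ 2 * S) (hL : |(L : ℝ)| ≤ S)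
    (Mhat Lhat : ℝ) (δ η : ℝ)
    (hMhat : |Mhat - (M : ℝ)| ≤ δ) (hLhat : |Lhat - (L : ℝ)| ≤ η)
    (hguard1 : 4 * (S + η) + 1 ≤ (β : ℝ))
    (hguard2 : δ + (S + η) / (β : ℝ) < 1 / 2)
    (hδ : δ ≤ 1 / 4) :
    round (Mhat + Lhat / β) = M ∧
    round (Mhat / β + Lhat / (β : ℝ) ^ 2) = 0 ∧
    round (Mhat + Lhat / β) - β * round (Mhat / β + Lhat / (β : ℝ) ^ 2) = M :=
  fp_guard_general β M L S hM hL Mhat Lhat δ η hMhat hLhat hguard1 hguard2 hδ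
end
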